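/- arXiv:1703.10595 — 6 statements merged into one kernel-verified Lean document; each statement's English description precedes it below -/
import Mathlib

section
/- For every real h ≥ 0 there exist reals k ≥ 0 and R ≥ 0, depending only on h, such that the following holds. Let G be a connected simple graph with vertex set V, and suppose that for every pair of vertices x, y ∈ V there is given a set L(x,y) ⊆ V containing x and y such that: (i) the subgraph of G induced on L(x,y) is connected; (ii) whenever d_G(x,y) ≤ 1, the diameter of L(x,y) in the graph metric is at most h; (iii) for all x, y, z ∈ V, L(x,y) ⊆ N_G(L(x,z) ∪ L(y,z), h). Then the vertex set V with the graph metric d_G is k-hyperbolic in the sense of Gromov, and moreover, for all x, y ∈ V, the Hausdorff distance (with respect to d_G) between L(x,y) and the vertex set of any geodesic from x to y is at most R. -/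
/-!
Write `C = (2h + 10)h` (for integral `h`). The heart of the matter is that every point `a` of
`L x y` lies within `C` of every geodesic `p` from `x` to `y`. Bisecting `p` and applying
slimness at the midpoint gives the weaker bound `(log₂ |p| + 2)h`. For the linear bound induct
on `|p|`: let `v` be a point of `p` nearest to `a`, at distance `r`, and let `x'`, `y'` be the
points of `p` at distance `K = r + 2h + C + 1` before and after `v`. Slimness of the triangles
`(x, y, x')` and `(y, x', y')` puts `a` within `2h` of `L x x'`, `L y y'` or `L x' y'`. In the
first two cases induction yields a point of `p` within `2h + C` of `a` but at distance `K` from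
`v`, which is impossible; in the third the logarithmic bound on the stretch of `p` from `x'` to
`y'` gives `r ≤ (log₂ (4(r + h)) + 4)h`, which forces `r ≤ C`.

Conversely, walking from `x` to `y` inside the connected set `L x y` and following nearby points
of `p` shows that `p` stays within `3C + 1` of `L x y`. A point of `L x y` within `h + 1` of both
`L x w` and `L y w`, found the same way, is an approximate centre of the triangle `(x, y, w)`;
comparing Gromov products with distances to it gives hyperbolicity with `k = 3C + 3h + 1`.
-/

lemma four_mul_add_five_mul_lt_two_pow {h j : ℕ} (hj : 2 * h + 7 ≤ j) :
    4 * (j + 5) * h < 2 ^ j := by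
  induction j, hj using Nat.le_induction with
  | base =>
    have hh : h + 1 ≤ 2 ^ h := Nat.lt_two_pow_self
    rw [show 2 * h + 7 = h + h + 7 by ring, pow_add, pow_add]
    nlinarith [Nat.mul_le_mul hh hh]
  | succ j _ ih =>
    rw [pow_succ]
    nlinarith

lemma le_of_le_log_mul {r h : ℕ} (hr : r ≤ (Nat.log 2 (4 * (r + h)) + 4) * h) :
    r ≤ (2 * h + 10) * h := by
  set ℓ := Nat.log 2 (4 * (r + h))
  by_contra! hlt
  have hℓ : 2 * h + 7 ≤ ℓ := by
    by_contra! hℓ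
    have : (ℓ + 4) * h ≤ (2 * h + 10) * h := Nat.mul_le_mul_right h (by omega)
    omega
  have hpow : 2 ^ ℓ ≤ 4 * (r + h) := Nat.pow_log_le_self 2 (by omega)
  have := four_mul_add_five_mul_lt_two_pow hℓ
  nlinarith

namespace SimpleGraph

variable {V : Type*} {G : SimpleGraph V}

namespace Walk

variable {x y u w : V} {p : G.Walk x y}

lemma dist_getVert_of_length_eq_dist (hp : p.length = G.dist x y) {i : ℕ} (hi : i ≤ p.length) :
    G.dist x (p.getVert i) = i := by
  rw [← length_eq_dist_of_subwalk hp (p.isSubwalk_take i), take_length, min_eq_left hi]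

lemma dist_add_dist_of_length_eq_dist (hp : p.length = G.dist x y) (hu : u ∈ p.support) :
    G.dist x u + G.dist u y = G.dist x y := by
  obtain ⟨i, rfl, hi⟩ := mem_support_iff_exists_getVert.mp hu
  rw [dist_getVert_of_length_eq_dist hp hi,
    ← length_eq_dist_of_subwalk hp (p.isSubwalk_drop i), drop_length]
  omega

lemma dist_add_dist_of_dist_le (hp : p.length = G.dist x y) (hu : u ∈ p.support)
    (hw : w ∈ p.support) (huw : G.dist x u ≤ G.dist x w) :
    G.dist x u + G.dist u w = G.dist x w := by
  obtain ⟨i, rfl, hi⟩ := mem_support_iff_exists_getVert.mp hu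
  obtain ⟨j, rfl, hj⟩ := mem_support_iff_exists_getVert.mp hw
  rw [dist_getVert_of_length_eq_dist hp hi, dist_getVert_of_length_eq_dist hp hj] at huw
  have hu' : (p.take j).getVert i = p.getVert i := by rw [take_getVert, min_eq_right huw]
  exact dist_add_dist_of_length_eq_dist (length_eq_dist_of_subwalk hp (p.isSubwalk_take j))
    (hu' ▸ (p.take j).getVert_mem_support i)

lemma dist_add_dist_le_of_mem_support (hG : G.Connected) (hp : p.length = G.dist x y)
    (hu : u ∈ p.support) (w : V) :
    G.dist x w + G.dist y w ≤ G.dist x y + 2 * G.dist u w := by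
  have hxuy := dist_add_dist_of_length_eq_dist hp hu
  have hxw : G.dist x w ≤ G.dist x u + G.dist u w := hG.dist_triangle
  have hyw : G.dist y w ≤ G.dist y u + G.dist u w := hG.dist_triangle
  have hyu : G.dist y u = G.dist u y := dist_comm
  omega

end Walk

lemma exists_adj_of_induce_preconnected {S : Set V} (hS : (G.induce S).Preconnected) {x y : V}
    (hx : x ∈ S) (hy : y ∈ S) {P : V → Prop} (hPx : P x) (hPy : ¬P y) :
    ∃ c ∈ S, ∃ c' ∈ S, G.Adj c c' ∧ P c ∧ ¬P c' := by
  obtain ⟨W⟩ := hS ⟨x, hx⟩ ⟨y, hy⟩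
  obtain ⟨d, -, hd₁, hd₂⟩ := W.exists_boundary_dart {c | P c} hPx hPy
  exact ⟨d.fst, d.fst.2, d.snd, d.snd.2, d.adj, hd₁, hd₂⟩

variable {L : V → V → Set V} {h : ℕ}

structure IsSlimFamily (G : SimpleGraph V) (L : V → V → Set V) (h : ℕ) : Prop where
  left_mem (x y : V) : x ∈ L x y
  right_mem (x y : V) : y ∈ L x y
  small {x y : V} : G.dist x y ≤ 1 → ∀ a ∈ L x y, ∀ b ∈ L x y, G.dist a b ≤ h
  slim (x y z : V) : ∀ a ∈ L x y, ∃ b ∈ L x z ∪ L y z, G.dist a b ≤ h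

namespace IsSlimFamily

variable {x y : V}

lemma dist_le_of_dist_le_one (hL : G.IsSlimFamily L h) (hxy : G.dist x y ≤ 1) {a : V}
    (ha : a ∈ L x y) : G.dist a x ≤ h :=
  hL.small hxy a ha x (hL.left_mem x y)

lemma exists_mem_support_dist_le_of_length_le_two_pow (hG : G.Connected)
    (hL : G.IsSlimFamily L h) (j : ℕ) :
    ∀ {x y : V} (p : G.Walk x y), p.length = G.dist x y → p.length ≤ 2 ^ j →
      ∀ a ∈ L x y, ∃ u ∈ p.support, G.dist a u ≤ (j + 1) * h := by
  induction j with
  | zero =>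
    intro x y p hp hlen a ha
    exact ⟨x, p.start_mem_support, by simpa using hL.dist_le_of_dist_le_one (by omega) ha⟩
  | succ j ih =>
    intro x y p hp hlen a ha
    set m := p.length / 2
    obtain ⟨b, hb, hab⟩ := hL.slim x y (p.getVert m) a ha
    suffices ∃ u ∈ p.support, G.dist b u ≤ (j + 1) * h by
      obtain ⟨u, hu, hbu⟩ := this
      refine ⟨u, hu, ?_⟩
      have : G.dist a u ≤ G.dist a b + G.dist b u := hG.dist_triangle
      rw [add_one_mul (j + 1)]
      omega
    rcases hb with hb | hb
    · have hsub := p.isSubwalk_take m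
      obtain ⟨u, hu, hbu⟩ := ih (p.take m) (length_eq_dist_of_subwalk hp hsub)
        (by rw [Walk.take_length, pow_succ] at *; omega) b hb
      exact ⟨u, hsub.support_subset hu, hbu⟩
    · have hm : p.reverse.getVert (p.length - m) = p.getVert m := by
        rw [Walk.getVert_reverse, Nat.sub_sub_self (by omega)]
      have hsub := p.reverse.isSubwalk_take (p.length - m)
      rw [← hm] at hb
      obtain ⟨u, hu, hbu⟩ := ih (p.reverse.take (p.length - m))
        (length_eq_dist_of_subwalk (by rw [Walk.length_reverse, hp, dist_comm]) hsub)
        (by rw [Walk.take_length, Walk.length_reverse, pow_succ] at *; omega) b hb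
      exact ⟨u, by simpa using hsub.support_subset hu, hbu⟩

lemma exists_mem_support_dist_le_log (hG : G.Connected) (hL : G.IsSlimFamily L h)
    {p : G.Walk x y} (hp : p.length = G.dist x y) {a : V} (ha : a ∈ L x y) :
    ∃ u ∈ p.support, G.dist a u ≤ (Nat.log 2 p.length + 2) * h :=
  hL.exists_mem_support_dist_le_of_length_le_two_pow hG (Nat.log 2 p.length + 1) p hp
    (Nat.lt_pow_succ_log_self (by norm_num) _).le a ha

lemma exists_mem_support_dist_le_log_of_mem_getVert (hG : G.Connected)
    (hL : G.IsSlimFamily L h) {p : G.Walk x y} (hp : p.length = G.dist x y) {i m : ℕ}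
    (him : i ≤ m) (hm : m ≤ p.length) {b : V} (hb : b ∈ L (p.getVert i) (p.getVert m)) :
    ∃ u ∈ p.support, G.dist b u ≤ (Nat.log 2 (m - i) + 2) * h := by
  have hend : (p.drop i).getVert (m - i) = p.getVert m := by
    rw [Walk.drop_getVert, Nat.add_sub_cancel' him]
  rw [← hend] at hb
  have hsub := (Walk.isSubwalk_take (p.drop i) (m - i)).trans (p.isSubwalk_drop i)
  have hlen : ((p.drop i).take (m - i)).length = m - i := by
    rw [Walk.take_length, Walk.drop_length]
    omega
  obtain ⟨u, hu, hbu⟩ :=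
    hL.exists_mem_support_dist_le_log hG (length_eq_dist_of_subwalk hp hsub) hb
  exact ⟨u, hsub.support_subset hu, hlen ▸ hbu⟩

lemma le_of_forall_le_dist_of_mem_getVert (hG : G.Connected) (hL : G.IsSlimFamily L h)
    {p : G.Walk x y} (hp : p.length = G.dist x y) {a b : V} {r i m : ℕ}
    (hr : ∀ u ∈ p.support, r ≤ G.dist a u) (hab : G.dist a b ≤ 2 * h) (him : i ≤ m)
    (hm : m ≤ p.length) (hlen : m - i ≤ 4 * (r + h)) (hb : b ∈ L (p.getVert i) (p.getVert m)) :
    r ≤ (2 * h + 10) * h := by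
  obtain ⟨u, hu, hbu⟩ := hL.exists_mem_support_dist_le_log_of_mem_getVert hG hp him hm hb
  have hlog : Nat.log 2 (m - i) ≤ Nat.log 2 (4 * (r + h)) := Nat.log_mono_right hlen
  have : G.dist a u ≤ G.dist a b + G.dist b u := hG.dist_triangle
  have : r ≤ G.dist a u := hr u hu
  refine le_of_le_log_mul ?_
  nlinarith

/- With `K = G.dist a v + 2 * h + C + 1`, the vertex `p.getVert (G.dist x v - K)` lies `K` before
`v` on `p`; applied to `p` and to `p.reverse` this settles the two outer cases of the induction
step. -/
lemma exists_mem_support_dist_le_of_mem_getVert_sub (hG : G.Connected)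
    (hL : G.IsSlimFamily L h) {C : ℕ} (hC : 3 * h ≤ C) {p : G.Walk x y}
    (hp : p.length = G.dist x y)
    (ih : ∀ (x' y' : V) (q : G.Walk x' y'), q.length = G.dist x' y' → q.length < p.length →
      ∀ b ∈ L x' y', ∃ u ∈ q.support, G.dist b u ≤ C)
    {a b v : V} (hv : v ∈ p.support) (hab : G.dist a b ≤ 2 * h)
    (hb : b ∈ L x (p.getVert (G.dist x v - (G.dist a v + 2 * h + C + 1)))) :
    ∃ u ∈ p.support, G.dist a u ≤ C := by
  set K := G.dist a v + 2 * h + C + 1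
  by_cases htK : G.dist x v ≤ K
  · rw [Nat.sub_eq_zero_of_le htK, Walk.getVert_zero] at hb
    have := hL.dist_le_of_dist_le_one (by simp) hb
    have : G.dist a x ≤ G.dist a b + G.dist b x := hG.dist_triangle
    exact ⟨x, p.start_mem_support, by omega⟩
  exfalso
  have hvy := Walk.dist_add_dist_of_length_eq_dist hp hv
  have hsub := p.isSubwalk_take (G.dist x v - K)
  have hq := length_eq_dist_of_subwalk hp hsub
  have hlen : (p.take (G.dist x v - K)).length = G.dist x v - K := by
    rw [Walk.take_length]
    omega
  obtain ⟨u, hu, hbu⟩ := ih x _ _ hq (by omega) b hb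
  have hxu := Walk.dist_add_dist_of_length_eq_dist hq hu
  have : G.dist x v ≤ G.dist x u + G.dist u v := hG.dist_triangle
  have : G.dist u v ≤ G.dist u a + G.dist a v := hG.dist_triangle
  have : G.dist a u ≤ G.dist a b + G.dist b u := hG.dist_triangle
  have : G.dist u a = G.dist a u := dist_comm
  omega

lemma exists_mem_support_dist_le_of_forall_shorter (hG : G.Connected)
    (hL : G.IsSlimFamily L h) {p : G.Walk x y} (hp : p.length = G.dist x y)
    (ih : ∀ (x' y' : V) (q : G.Walk x' y'), q.length = G.dist x' y' → q.length < p.length →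
      ∀ b ∈ L x' y', ∃ u ∈ q.support, G.dist b u ≤ (2 * h + 10) * h)
    {a : V} (ha : a ∈ L x y) : ∃ u ∈ p.support, G.dist a u ≤ (2 * h + 10) * h := by
  set C := (2 * h + 10) * h
  have hC : 3 * h ≤ C := Nat.mul_le_mul_right h (by omega)
  obtain ⟨v, hv, hmin⟩ := Set.exists_min_image {u | u ∈ p.support} (G.dist a)
    p.support.finite_toSet ⟨x, p.start_mem_support⟩
  set K := G.dist a v + 2 * h + C + 1
  obtain ⟨b₁, hb₁, hab₁⟩ := hL.slim x y (p.getVert (G.dist x v - K)) a ha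
  rcases hb₁ with hb₁ | hb₁
  · exact hL.exists_mem_support_dist_le_of_mem_getVert_sub hG hC hp ih hv (by omega) hb₁
  obtain ⟨b, hb, hbb₁⟩ := hL.slim y _ (p.reverse.getVert (G.dist y v - K)) b₁ hb₁
  have hab : G.dist a b ≤ 2 * h := by
    have : G.dist a b ≤ G.dist a b₁ + G.dist b₁ b := hG.dist_triangle
    omega
  rcases hb with hb | hb
  · obtain ⟨u, hu, hau⟩ := hL.exists_mem_support_dist_le_of_mem_getVert_sub hG hC
      (p := p.reverse) (by rw [Walk.length_reverse, hp, dist_comm]) (by simpa using ih)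
      (by simpa using hv) hab hb
    exact ⟨u, by simpa using hu, hau⟩
  by_contra! hfar
  have := hfar v hv
  have hvy := Walk.dist_add_dist_of_length_eq_dist hp hv
  have : G.dist y v = G.dist v y := dist_comm
  rw [Walk.getVert_reverse] at hb
  have := hL.le_of_forall_le_dist_of_mem_getVert hG hp hmin hab (by omega) (by omega)
    (by omega) hb
  omega

lemma exists_mem_support_dist_le (hG : G.Connected) (hL : G.IsSlimFamily L h)
    {p : G.Walk x y} (hp : p.length = G.dist x y) {a : V} (ha : a ∈ L x y) :
    ∃ u ∈ p.support, G.dist a u ≤ (2 * h + 10) * h := by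
  induction hn : p.length using Nat.strong_induction_on generalizing x y a with
  | _ n ih =>
    subst hn
    exact hL.exists_mem_support_dist_le_of_forall_shorter hG hp
      (fun x' y' q hq hlt b hb => ih _ hlt hq hb rfl) ha

lemma exists_mem_dist_le_of_mem_support (hG : G.Connected) (hL : G.IsSlimFamily L h)
    (hconn : (G.induce (L x y)).Preconnected) {p : G.Walk x y} (hp : p.length = G.dist x y)
    {v : V} (hv : v ∈ p.support) : ∃ c ∈ L x y, G.dist v c ≤ 3 * ((2 * h + 10) * h) + 1 := by
  set C := (2 * h + 10) * h
  have hvy := Walk.dist_add_dist_of_length_eq_dist hp hv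
  by_cases hy : ∃ u ∈ p.support, G.dist y u ≤ C ∧ G.dist x u ≤ G.dist x v
  · obtain ⟨u, hu, hyu, hxu⟩ := hy
    have := Walk.dist_add_dist_of_length_eq_dist hp hu
    have : G.dist y u = G.dist u y := dist_comm
    exact ⟨y, hL.right_mem x y, by omega⟩
  obtain ⟨c, -, c', hc', hadj, ⟨u, hu, hcu, hxu⟩, hc'far⟩ :=
    exists_adj_of_induce_preconnected hconn (hL.left_mem x y) (hL.right_mem x y)
      (P := fun c => ∃ u ∈ p.support, G.dist c u ≤ C ∧ G.dist x u ≤ G.dist x v)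
      ⟨x, p.start_mem_support, by simp, by simp⟩ hy
  obtain ⟨u', hu', hc'u'⟩ := hL.exists_mem_support_dist_le hG hp hc'
  have hxu' : G.dist x v < G.dist x u' := by
    by_contra! hle
    exact hc'far ⟨u', hu', hc'u', hle⟩
  have := Walk.dist_add_dist_of_dist_le hp hv hu' hxu'.le
  have : G.dist c c' = 1 := dist_eq_one_iff_adj.mpr hadj
  have : G.dist x u' ≤ G.dist x u + G.dist u u' := hG.dist_triangle
  have : G.dist u u' ≤ G.dist u c + G.dist c u' := hG.dist_triangle
  have : G.dist c u' ≤ G.dist c c' + G.dist c' u' := hG.dist_triangle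
  have : G.dist v c' ≤ G.dist v u' + G.dist u' c' := hG.dist_triangle
  have : G.dist u c = G.dist c u := dist_comm
  have : G.dist u' c' = G.dist c' u' := dist_comm
  exact ⟨c', hc', by omega⟩

lemma exists_mem_dist_le_and_dist_le (hG : G.Connected) (hL : G.IsSlimFamily L h)
    (hconn : (G.induce (L x y)).Preconnected) (w : V) :
    ∃ c ∈ L x y, (∃ b ∈ L x w, G.dist c b ≤ h) ∧ ∃ b ∈ L y w, G.dist c b ≤ h + 1 := by
  by_cases hy : ∃ b ∈ L x w, G.dist y b ≤ h
  · exact ⟨y, hL.right_mem x y, hy, y, hL.left_mem y w, by simp⟩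
  obtain ⟨c, hc, c', hc', hadj, hcP, hc'P⟩ :=
    exists_adj_of_induce_preconnected hconn (hL.left_mem x y) (hL.right_mem x y)
      (P := fun c => ∃ b ∈ L x w, G.dist c b ≤ h) ⟨x, hL.left_mem x w, by simp⟩ hy
  obtain ⟨b, hb | hb, hc'b⟩ := hL.slim x y w c' hc'
  · exact absurd ⟨b, hb, hc'b⟩ hc'P
  refine ⟨c, hc, hcP, b, hb, ?_⟩
  have : G.dist c b ≤ G.dist c c' + G.dist c' b := hG.dist_triangle
  have : G.dist c c' = 1 := dist_eq_one_iff_adj.mpr hadj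
  omega

lemma dist_add_dist_le (hG : G.Connected) (hL : G.IsSlimFamily L h) {b : V} (hb : b ∈ L x y)
    (w : V) : G.dist x w + G.dist y w ≤ G.dist x y + 2 * (G.dist b w + (2 * h + 10) * h) := by
  obtain ⟨p, hp⟩ := hG.exists_walk_length_eq_dist x y
  obtain ⟨u, hu, hbu⟩ := hL.exists_mem_support_dist_le hG hp hb
  have := Walk.dist_add_dist_le_of_mem_support hG hp hu w
  have : G.dist u w ≤ G.dist u b + G.dist b w := hG.dist_triangle
  have : G.dist u b = G.dist b u := dist_comm
  omega

lemma dist_add_two_mul_dist_le (hG : G.Connected) (hL : G.IsSlimFamily L h) {w b₁ b₂ : V}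
    (hb₁ : b₁ ∈ L x w) (hb₂ : b₂ ∈ L y w) (c : V) :
    G.dist x y + 2 * G.dist c w ≤
      G.dist x w + G.dist y w + 2 * (G.dist c b₁ + G.dist c b₂) + 4 * ((2 * h + 10) * h) := by
  obtain ⟨p₁, hp₁⟩ := hG.exists_walk_length_eq_dist x w
  obtain ⟨p₂, hp₂⟩ := hG.exists_walk_length_eq_dist y w
  obtain ⟨u₁, hu₁, hbu₁⟩ := hL.exists_mem_support_dist_le hG hp₁ hb₁
  obtain ⟨u₂, hu₂, hbu₂⟩ := hL.exists_mem_support_dist_le hG hp₂ hb₂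
  have := Walk.dist_add_dist_of_length_eq_dist hp₁ hu₁
  have := Walk.dist_add_dist_of_length_eq_dist hp₂ hu₂
  have hcu₁ : G.dist c u₁ ≤ G.dist c b₁ + G.dist b₁ u₁ := hG.dist_triangle
  have hcu₂ : G.dist c u₂ ≤ G.dist c b₂ + G.dist b₂ u₂ := hG.dist_triangle
  have : G.dist x y ≤ G.dist x c + G.dist c y := hG.dist_triangle
  have : G.dist x c ≤ G.dist x u₁ + G.dist u₁ c := hG.dist_triangle
  have : G.dist y c ≤ G.dist y u₂ + G.dist u₂ c := hG.dist_triangle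
  have : G.dist c w ≤ G.dist c u₁ + G.dist u₁ w := hG.dist_triangle
  have : G.dist c w ≤ G.dist c u₂ + G.dist u₂ w := hG.dist_triangle
  have : G.dist c y = G.dist y c := dist_comm
  have : G.dist u₁ c = G.dist c u₁ := dist_comm
  have : G.dist u₂ c = G.dist c u₂ := dist_comm
  omega

lemma gromov_product_ge_min_sub (hG : G.Connected) (hL : G.IsSlimFamily L h)
    (hconn : ∀ x y, (G.induce (L x y)).Preconnected) (w x y z : V) :
    ((G.dist x w : ℝ) + G.dist y w - G.dist x y) / 2 ≥
      min (((G.dist x w : ℝ) + G.dist z w - G.dist x z) / 2)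
        (((G.dist y w : ℝ) + G.dist z w - G.dist y z) / 2) -
      (3 * ((2 * h + 10) * h) + 3 * h + 1 : ℕ) := by
  obtain ⟨c, hc, ⟨b₁, hb₁, hcb₁⟩, b₂, hb₂, hcb₂⟩ :=
    hL.exists_mem_dist_le_and_dist_le hG (hconn x y) w
  have := hL.dist_add_two_mul_dist_le hG hb₁ hb₂ c
  obtain ⟨b, hb, hcb⟩ := hL.slim x y z c hc
  have : G.dist b w ≤ G.dist b c + G.dist c w := hG.dist_triangle
  have : G.dist b c = G.dist c b := dist_comm
  rcases hb with hb | hb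
  · have := hL.dist_add_dist_le hG hb w
    have hk : G.dist x w + G.dist z w + G.dist x y ≤
        G.dist x z + G.dist x w + G.dist y w + 2 * (3 * ((2 * h + 10) * h) + 3 * h + 1) := by
      omega
    rify at hk
    push_cast
    linarith [min_le_left (((G.dist x w : ℝ) + G.dist z w - G.dist x z) / 2)
      (((G.dist y w : ℝ) + G.dist z w - G.dist y z) / 2)]
  · have := hL.dist_add_dist_le hG hb w
    have hk : G.dist y w + G.dist z w + G.dist x y ≤
        G.dist y z + G.dist x w + G.dist y w + 2 * (3 * ((2 * h + 10) * h) + 3 * h + 1) := by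
      omega
    rify at hk
    push_cast
    linarith [min_le_right (((G.dist x w : ℝ) + G.dist z w - G.dist x z) / 2)
      (((G.dist y w : ℝ) + G.dist z w - G.dist y z) / 2)]

end IsSlimFamily

end SimpleGraph

/-- For every real `h ≥ 0` there exist `k, R ≥ 0` (depending only on `h`)
such that: for any connected simple graph `G` on `V` and any family of sets
`L x y ⊆ V` containing `x` and `y` with (i) the induced subgraph on `L x y` connected,
(ii) diameter of `L x y` at most `h` whenever `d_G(x,y) ≤ 1`, and
(iii) `L x y ⊆ N_G(L x z ∪ L y z, h)` for all `x y z`, the graph metric on `V` is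
`k`-hyperbolic in the sense of Gromov, and for all `x, y` the Hausdorff distance between
`L x y` and the vertex set of any geodesic from `x` to `y` is at most `R`. -/
theorem disc_graph_hyperbolicity_criterion_connected :
    ∀ h : ℝ, 0 ≤ h → ∃ k R : ℝ, 0 ≤ k ∧ 0 ≤ R ∧
      ∀ (V : Type) (G : SimpleGraph V), G.Connected →
      ∀ L : V → V → Set V,
      (∀ x y : V, x ∈ L x y ∧ y ∈ L x y) →
      -- (i) the induced subgraph on `L x y` is connected
      (∀ x y : V, (G.induce (L x y)).Connected) →
      -- (ii) diameter bound for adjacent or equal endpoints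
      (∀ x y : V, (G.dist x y : ℝ) ≤ 1 →
        ∀ a ∈ L x y, ∀ b ∈ L x y, (G.dist a b : ℝ) ≤ h) →
      -- (iii) the slim-triangles condition
      (∀ x y z : V, ∀ a ∈ L x y,
        ∃ b ∈ L x z ∪ L y z, (G.dist a b : ℝ) ≤ h) →
      -- conclusion: Gromov hyperbolicity of the graph metric ...
      ((∀ w x y z : V,
          ((G.dist x w : ℝ) + (G.dist y w : ℝ) - (G.dist x y : ℝ)) / 2 ≥
            min (((G.dist x w : ℝ) + (G.dist z w : ℝ) - (G.dist x z : ℝ)) / 2)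
                (((G.dist y w : ℝ) + (G.dist z w : ℝ) - (G.dist y z : ℝ)) / 2) - k) ∧
        -- ... and the Hausdorff-distance bound for geodesics
        (∀ x y : V, ∀ p : G.Walk x y, p.length = G.dist x y →
          (∀ a ∈ L x y, ∃ v ∈ p.support, (G.dist a v : ℝ) ≤ R) ∧
          (∀ v ∈ p.support, ∃ a ∈ L x y, (G.dist v a : ℝ) ≤ R))) := by
  intro h _
  set H := ⌈h⌉₊
  set C := (2 * H + 10) * H
  refine ⟨(3 * C + 3 * H + 1 : ℕ), (3 * C + 1 : ℕ), by positivity, by positivity, ?_⟩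
  intro V G hG L hmem hconn hsmall hslim
  have hL : G.IsSlimFamily L H :=
    { left_mem := fun x y => (hmem x y).1
      right_mem := fun x y => (hmem x y).2
      small := fun hxy a ha b hb => by
        exact_mod_cast (hsmall _ _ (by exact_mod_cast hxy) a ha b hb).trans (Nat.le_ceil h)
      slim := fun x y z a ha => by
        obtain ⟨b, hb, hab⟩ := hslim x y z a ha
        exact ⟨b, hb, by exact_mod_cast hab.trans (Nat.le_ceil h)⟩ }
  refine ⟨fun w x y z => ?_, fun x y p hp => ⟨fun a ha => ?_, fun v hv => ?_⟩⟩
  · exact hL.gromov_product_ge_min_sub hG (fun x y => (hconn x y).preconnected) w x y z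
  · obtain ⟨u, hu, hau⟩ := hL.exists_mem_support_dist_le hG hp ha
    exact ⟨u, hu, by exact_mod_cast hau.trans (by omega)⟩
  · obtain ⟨c, hc, hvc⟩ := hL.exists_mem_dist_le_of_mem_support hG (hconn x y).preconnected hp hv
    exact ⟨c, hc, by exact_mod_cast hvc⟩
end

section
/- For all reals h ≥ 0 and h' ≥ 0 there exist reals k ≥ 0 and R ≥ 0, depending only on h and h', such that the following holds. Let G be a connected simple graph with vertex set V, and suppose that for every pair of vertices x, y ∈ V there is given a set L(x,y) ⊆ V containing x and y such that: (i) the subgraph of G induced on the closed h'-neighborhood N_G(L(x,y), h') is connected; (ii) whenever d_G(x,y) ≤ 1, the diameter of L(x,y) in the graph metric is at most h; (iii) for all x, y, z ∈ V, L(x,y) ⊆ N_G(L(x,z) ∪ L(y,z), h). Then the vertex set V with the graph metric d_G is k-hyperbolic in the sense of Gromov, and for all x, y ∈ V, the Hausdorff distance (with respect to d_G) between L(x,y) and the vertex set of any geodesic from x to y is at most R. -/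
/-!
By bisection, `L x y` lies within `H (m + 1)` of every path from `x` to `y` of length `≤ 2 ^ m`.
For a geodesic this improves to a uniform bound `D`, by induction on `d(x, y)`: if `a ∈ L x y`
were at distance `r > D` from the geodesic, cutting it at distance `3r` on both sides of the
closest point and applying the slim-triangle condition twice would put `a` near `L` of one of
the three pieces; the two outer pieces are shorter geodesics, hence too far from `a`, and the
middle one has length `≤ 6r`, so its `L` is within `O(H log r)` of it, less than `r`.
Conversely, a path from `x` to `y` inside the `h'`-neighbourhood of `L x y` meets every sphere
around `x`, which puts each point of the geodesic within `h' + 2D` of `L x y`. Together with the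
slim-triangle condition this makes geodesic triangles uniformly slim, and slim triangles give
Gromov's four-point condition.
-/

namespace SimpleGraph

variable {V : Type*} {G : SimpleGraph V}

namespace Walk

theorem dist_getVert_getVert_of_length_eq_dist {u v : V} {p : G.Walk u v}
    (hp : p.length = G.dist u v) {i j : ℕ} (hij : i ≤ j) (hj : j ≤ p.length) :
    G.dist (p.getVert i) (p.getVert j) = j - i := by
  have := length_eq_dist_of_subwalk hp ((isSubwalk_take _ (j - i)).trans (p.isSubwalk_drop i))
  rw [take_length, drop_length, drop_getVert, Nat.add_sub_cancel' hij] at this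
  omega

theorem dist_start_getVert_of_length_eq_dist {u v : V} {p : G.Walk u v}
    (hp : p.length = G.dist u v) {i : ℕ} (hi : i ≤ p.length) : G.dist u (p.getVert i) = i := by
  simpa using dist_getVert_getVert_of_length_eq_dist hp (Nat.zero_le i) hi

theorem dist_getVert_end_of_length_eq_dist {u v : V} {p : G.Walk u v}
    (hp : p.length = G.dist u v) {i : ℕ} (hi : i ≤ p.length) :
    G.dist (p.getVert i) v = p.length - i := by
  simpa using dist_getVert_getVert_of_length_eq_dist hp hi le_rfl

theorem dist_add_dist_of_mem_support {u v w : V} {p : G.Walk u v}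
    (hp : p.length = G.dist u v) (hw : w ∈ p.support) :
    G.dist u w + G.dist w v = G.dist u v := by
  obtain ⟨i, rfl, hi⟩ := mem_support_iff_exists_getVert.1 hw
  rw [dist_start_getVert_of_length_eq_dist hp hi, dist_getVert_end_of_length_eq_dist hp hi]
  omega

theorem sub_le_dist_add_dist_of_length_eq_dist (hc : G.Connected) {u v : V} {p : G.Walk u v}
    (hp : p.length = G.dist u v) {i j : ℕ} (hj : j ≤ p.length) (w : V) :
    j - i ≤ G.dist w (p.getVert i) + G.dist w (p.getVert j) := by
  rcases le_total i j with hij | hji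
  · have := dist_getVert_getVert_of_length_eq_dist hp hij hj
    have := hc.dist_triangle (u := p.getVert i) (v := w) (w := p.getVert j)
    have := dist_comm (G := G) (u := p.getVert i) (v := w)
    omega
  · omega

theorem dist_add_dist_le_of_mem_support_s1 (hc : G.Connected) {x z v : V} {q : G.Walk x z}
    (hq : q.length = G.dist x z) (hv : v ∈ q.support) (w : V) :
    G.dist x w + G.dist z w ≤ G.dist x z + 2 * G.dist v w := by
  have := dist_add_dist_of_mem_support hq hv
  have := hc.dist_triangle (u := x) (v := v) (w := w)
  have := hc.dist_triangle (u := z) (v := v) (w := w)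
  have := dist_comm (G := G) (u := z) (v := v)
  omega

end Walk

theorem exists_mem_dist_eq_of_induce_connected {S : Set V} (hS : (G.induce S).Connected)
    {x y : V} (hx : x ∈ S) (hy : y ∈ S) {i : ℕ} (hi : i ≤ G.dist x y) :
    ∃ v ∈ S, G.dist x v = i := by
  rcases Nat.eq_zero_or_pos i with rfl | hi₀
  · exact ⟨x, hx, dist_self⟩
  obtain ⟨σ⟩ := hS.preconnected ⟨x, hx⟩ ⟨y, hy⟩
  obtain ⟨d, -, hfst, hsnd⟩ :=
    σ.exists_boundary_dart {v | G.dist x v < i} (by simpa using hi₀) (by simpa using hi)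
  have hfst : G.dist x d.fst < i := hfst
  have hsnd : ¬G.dist x d.snd < i := hsnd
  have hadj : G.Adj d.fst d.snd := d.adj
  have := hadj.reachable.dist_triangle_right x
  rw [dist_eq_one_iff_adj.2 hadj] at this
  exact ⟨d.snd, d.snd.2, by omega⟩

theorem Walk.exists_mem_dist_getVert_le_of_induce_connected (hc : G.Connected) {x y : V}
    {p : G.Walk x y} (hp : p.length = G.dist x y) {A S : Set V} {K D : ℕ}
    (hS : (G.induce S).Connected) (hx : x ∈ S) (hy : y ∈ S) (hSA : ∀ v ∈ S, ∃ a ∈ A, G.dist v a ≤ K)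
    (hAp : ∀ a ∈ A, ∃ j ≤ p.length, G.dist a (p.getVert j) ≤ D) {i : ℕ} (hi : i ≤ p.length) :
    ∃ a ∈ A, G.dist (p.getVert i) a ≤ K + 2 * D := by
  obtain ⟨v, hvS, hxv⟩ := exists_mem_dist_eq_of_induce_connected hS hx hy (hp ▸ hi)
  obtain ⟨a, haA, hva⟩ := hSA v hvS
  obtain ⟨k, hk, hak⟩ := hAp a haA
  refine ⟨a, haA, ?_⟩
  have hxk := p.dist_start_getVert_of_length_eq_dist hp hk
  have := hc.dist_triangle (u := x) (v := v) (w := p.getVert k)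
  have := hc.dist_triangle (u := x) (v := p.getVert k) (w := v)
  have := hc.dist_triangle (u := v) (v := a) (w := p.getVert k)
  have := hc.dist_triangle (u := p.getVert i) (v := p.getVert k) (w := a)
  have := dist_comm (G := G) (u := p.getVert k) (v := v)
  have := dist_comm (G := G) (u := p.getVert k) (v := a)
  rcases le_total i k with hik | hki
  · have := p.dist_getVert_getVert_of_length_eq_dist hp hik hk
    omega
  · have := p.dist_getVert_getVert_of_length_eq_dist hp hki hi
    have := dist_comm (G := G) (u := p.getVert i) (v := p.getVert k)
    omega

theorem mul_log_add_seven_lt (H : ℕ) {r : ℕ} (hr : 2 ^ (2 * H + 8) < r) :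
    H * (Nat.log 2 r + 7) < r := by
  have hpow : ∀ ℓ, 2 * H + 8 ≤ ℓ → H * (ℓ + 7) < 2 ^ ℓ := by
    intro ℓ hℓ
    induction ℓ, hℓ using Nat.le_induction with
    | base =>
      have h2H : H < 2 ^ H := Nat.lt_two_pow_self
      have : 2 ^ (2 * H + 8) = 2 ^ H * 2 ^ H * 256 := by ring
      nlinarith
    | succ ℓ hℓ ih =>
      have : H < 2 ^ ℓ := Nat.lt_two_pow_self.trans_le (Nat.pow_le_pow_right two_pos (by omega))
      rw [pow_succ]
      linarith
  have hr₀ : r ≠ 0 := Nat.ne_zero_of_lt hr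
  calc H * (Nat.log 2 r + 7) < 2 ^ Nat.log 2 r :=
        hpow _ ((Nat.le_log_iff_pow_le one_lt_two hr₀).2 hr.le)
    _ ≤ r := Nat.pow_log_le_self 2 hr₀

/-- Bowditch's "guessing geodesics" conditions on the sets `L x y`, with constant `H`. -/
structure GuessedGeodesics (G : SimpleGraph V) (L : V → V → Set V) (H : ℕ) : Prop where
  left_mem (x y : V) : x ∈ L x y
  right_mem (x y : V) : y ∈ L x y
  dist_le_of_dist_le_one {x y : V} (hxy : G.dist x y ≤ 1) {a b : V} (ha : a ∈ L x y)
    (hb : b ∈ L x y) : G.dist a b ≤ H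
  exists_dist_le (x y z : V) {a : V} (ha : a ∈ L x y) : ∃ b ∈ L x z ∪ L y z, G.dist a b ≤ H

namespace GuessedGeodesics

variable {L : V → V → Set V} {H : ℕ}

theorem exists_dist_getVert_le_of_length_le_two_pow (hc : G.Connected)
    (hL : GuessedGeodesics G L H) {m : ℕ} {x y : V} (p : G.Walk x y) (hp : p.length ≤ 2 ^ m)
    {a : V} (ha : a ∈ L x y) : ∃ j ≤ p.length, G.dist a (p.getVert j) ≤ H * (m + 1) := by
  induction m generalizing x y a with
  | zero =>
    refine ⟨0, Nat.zero_le _, ?_⟩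
    simpa using hL.dist_le_of_dist_le_one ((dist_le p).trans hp) ha (hL.left_mem x y)
  | succ m ih =>
    set t := min (2 ^ m) p.length
    obtain ⟨b, hb, hab⟩ := hL.exists_dist_le x y (p.getVert t) ha
    rw [Nat.mul_succ]
    rcases hb with hb | hb
    · obtain ⟨j, hj, hbj⟩ := ih (p.take t) (by simp [t]) hb
      rw [Walk.take_length] at hj
      rw [Walk.take_getVert, min_eq_right (by omega)] at hbj
      refine ⟨j, by omega, ?_⟩
      have := hc.dist_triangle (u := a) (v := b) (w := p.getVert j)
      omega
    · obtain ⟨j, hj, hbj⟩ := ih (p.drop t).reverse (by simp [t]; omega) hb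
      rw [Walk.length_reverse, Walk.drop_length] at hj
      rw [Walk.getVert_reverse, Walk.drop_length, Walk.drop_getVert] at hbj
      refine ⟨t + (p.length - t - j), by omega, ?_⟩
      have := hc.dist_triangle (u := a) (v := b) (w := p.getVert (t + (p.length - t - j)))
      omega

theorem le_dist_add_of_mem_segment (hc : G.Connected) (hL : GuessedGeodesics G L H)
    {x y a : V} (p : G.Walk x y) {r : ℕ} (hmin : ∀ j ≤ p.length, r ≤ G.dist a (p.getVert j))
    {s s' m : ℕ} (hss' : s ≤ s') (hs' : s' ≤ p.length) (hm : s' - s ≤ 2 ^ m) {b : V}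
    (hb : b ∈ L (p.getVert s) (p.getVert s')) : r ≤ G.dist a b + H * (m + 1) := by
  have hend : (p.drop s).getVert (s' - s) = p.getVert s' := by
    rw [Walk.drop_getVert, Nat.add_sub_cancel' hss']
  obtain ⟨j, hj, hbj⟩ := hL.exists_dist_getVert_le_of_length_le_two_pow hc (m := m)
    (((p.drop s).take (s' - s)).copy rfl hend) (by simp; omega) hb
  rw [Walk.getVert_copy, Walk.take_getVert, Walk.drop_getVert] at hbj
  have := hc.dist_triangle (u := a) (v := b) (w := p.getVert (s + min (s' - s) j))
  have := hmin (s + min (s' - s) j) (by omega)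
  omega

theorem dist_getVert_le_of_minimal (hc : G.Connected) (hL : GuessedGeodesics G L H) {D : ℕ}
    (hD : ∀ r, D < r → H * (Nat.log 2 r + 7) < r) {x y : V} (p : G.Walk x y)
    (hp : p.length = G.dist x y)
    (ih : ∀ ⦃x' y' : V⦄ (q : G.Walk x' y'), q.length = G.dist x' y' → q.length < p.length →
      ∀ b ∈ L x' y', ∃ j ≤ q.length, G.dist b (q.getVert j) ≤ D)
    {a : V} (ha : a ∈ L x y) {i : ℕ} (hi : i ≤ p.length)
    (hmin : ∀ j ≤ p.length, G.dist a (p.getVert i) ≤ G.dist a (p.getVert j)) :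
    G.dist a (p.getVert i) ≤ D := by
  by_contra! hrD
  set r := G.dist a (p.getVert i)
  have hr : H * (Nat.log 2 r + 7) < r := hD r hrD
  have h7H : H * 7 ≤ H * (Nat.log 2 r + 7) := Nat.mul_le_mul_left _ (by omega)
  have hlog : H * (Nat.log 2 r + 4 + 1) + 2 * H < r := by linarith
  set t := i - 3 * r
  set s := min (i + 3 * r) p.length
  obtain ⟨b, hb | hb, hab⟩ := hL.exists_dist_le x y (p.getVert t) ha
  · have := hc.dist_triangle (u := b) (v := a) (w := p.getVert i)
    have := dist_comm (G := G) (u := a) (v := b)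
    rcases Nat.eq_zero_or_pos t with ht | ht
    · rw [ht, p.getVert_zero, ← p.getVert_zero] at hb
      have := hL.le_dist_add_of_mem_segment hc p hmin le_rfl (Nat.zero_le _) (m := 0) (by simp) hb
      omega
    obtain ⟨j, hj, hbj⟩ := ih (p.take t) (length_eq_dist_of_subwalk hp (p.isSubwalk_take t))
      (by simp; omega) b hb
    rw [Walk.take_length] at hj
    rw [Walk.take_getVert, min_eq_right (by omega)] at hbj
    have := p.sub_le_dist_add_dist_of_length_eq_dist hc hp (i := j) hi b
    omega
  obtain ⟨c, hc' | hc', hbc⟩ := hL.exists_dist_le y (p.getVert t) (p.getVert s) hb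
  · have := hc.dist_triangle (u := a) (v := b) (w := c)
    have := hc.dist_triangle (u := c) (v := a) (w := p.getVert i)
    have := dist_comm (G := G) (u := a) (v := c)
    rcases eq_or_lt_of_le (show s ≤ p.length from min_le_right _ _) with hs | hs
    · rw [hs, p.getVert_length, ← p.getVert_length] at hc'
      have := hL.le_dist_add_of_mem_segment hc p hmin le_rfl le_rfl (m := 0) (by simp) hc'
      omega
    have hq : (p.drop s).reverse.length = G.dist y (p.getVert s) := by
      rw [Walk.length_reverse, dist_comm]
      exact length_eq_dist_of_subwalk hp (p.isSubwalk_drop s)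
    obtain ⟨j, hj, hcj⟩ := ih _ hq (by simp; omega) c hc'
    rw [Walk.length_reverse, Walk.drop_length] at hj
    rw [Walk.getVert_reverse, Walk.drop_length, Walk.drop_getVert] at hcj
    have := p.sub_le_dist_add_dist_of_length_eq_dist hc hp (i := i)
      (j := s + (p.length - s - j)) (by omega) c
    omega
  · have := hc.dist_triangle (u := a) (v := b) (w := c)
    have : r < 2 ^ (Nat.log 2 r + 1) := Nat.lt_pow_succ_log_self one_lt_two r
    have := hL.le_dist_add_of_mem_segment hc p hmin (by omega) (by omega)
      (m := Nat.log 2 r + 4) (by rw [pow_add]; omega) hc'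
    omega

theorem exists_dist_getVert_le_of_length_eq_dist (hc : G.Connected) (hL : GuessedGeodesics G L H)
    {x y : V} (p : G.Walk x y) (hp : p.length = G.dist x y) {a : V} (ha : a ∈ L x y) :
    ∃ j ≤ p.length, G.dist a (p.getVert j) ≤ 2 ^ (2 * H + 8) := by
  obtain ⟨n, hn⟩ : ∃ n, p.length = n := ⟨_, rfl⟩
  induction n using Nat.strong_induction_on generalizing x y a with
  | _ n ih =>
    obtain ⟨i, hi, hmin⟩ := (Finset.Iic p.length).exists_min_image
      (fun j ↦ G.dist a (p.getVert j)) Finset.nonempty_Iic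
    simp only [Finset.mem_Iic] at hi hmin
    exact ⟨i, hi, hL.dist_getVert_le_of_minimal hc (fun _ ↦ mul_log_add_seven_lt H) p hp
      (fun _ _ q hq hlt b hb ↦ ih _ (hn ▸ hlt) q hq hb rfl) ha hi hmin⟩

end GuessedGeodesics

theorem GuessedGeodesics.exists_mem_dist_getVert_le {L : V → V → Set V} {H K : ℕ}
    (hc : G.Connected) (hL : GuessedGeodesics G L H)
    (hconn : ∀ x y, (G.induce {v | ∃ a ∈ L x y, G.dist v a ≤ K}).Connected) {x y : V}
    {p : G.Walk x y} (hp : p.length = G.dist x y) {i : ℕ} (hi : i ≤ p.length) :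
    ∃ a ∈ L x y, G.dist (p.getVert i) a ≤ K + 2 * 2 ^ (2 * H + 8) :=
  p.exists_mem_dist_getVert_le_of_induce_connected hc hp (hconn x y)
    ⟨x, hL.left_mem x y, by simp⟩ ⟨y, hL.right_mem x y, by simp⟩ (fun _ hv ↦ hv)
    (fun _ ha ↦ hL.exists_dist_getVert_le_of_length_eq_dist hc p hp ha) hi

def HasSlimGeodesicTriangles (G : SimpleGraph V) (δ : ℕ) : Prop :=
  ∀ ⦃x y z : V⦄ (p : G.Walk x y) (q : G.Walk x z) (r : G.Walk y z), p.length = G.dist x y →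
    q.length = G.dist x z → r.length = G.dist y z →
    ∀ u ∈ p.support, ∃ v ∈ q.support ++ r.support, G.dist u v ≤ δ

theorem GuessedGeodesics.hasSlimGeodesicTriangles {L : V → V → Set V} {H K : ℕ}
    (hc : G.Connected) (hL : GuessedGeodesics G L H)
    (hconn : ∀ x y, (G.induce {v | ∃ a ∈ L x y, G.dist v a ≤ K}).Connected) :
    G.HasSlimGeodesicTriangles (K + 3 * 2 ^ (2 * H + 8) + H) := by
  intro x y z p q r hp hq hr u hu
  obtain ⟨i, rfl, hi⟩ := Walk.mem_support_iff_exists_getVert.1 hu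
  obtain ⟨a, ha, hua⟩ := hL.exists_mem_dist_getVert_le hc hconn hp hi
  obtain ⟨b, hb, hab⟩ := hL.exists_dist_le x y z ha
  obtain ⟨v, hv, hbv⟩ : ∃ v ∈ q.support ++ r.support, G.dist b v ≤ 2 ^ (2 * H + 8) := by
    rcases hb with hb | hb
    · obtain ⟨j, -, hbj⟩ := hL.exists_dist_getVert_le_of_length_eq_dist hc q hq hb
      exact ⟨_, List.mem_append_left _ (q.getVert_mem_support j), hbj⟩
    · obtain ⟨j, -, hbj⟩ := hL.exists_dist_getVert_le_of_length_eq_dist hc r hr hb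
      exact ⟨_, List.mem_append_right _ (r.getVert_mem_support j), hbj⟩
  refine ⟨v, hv, ?_⟩
  have := hc.dist_triangle (u := p.getVert i) (v := a) (w := v)
  have := hc.dist_triangle (u := a) (v := b) (w := v)
  omega

namespace HasSlimGeodesicTriangles

variable {δ : ℕ}

theorem two_mul_dist_getVert_add_le (hc : G.Connected) (hδ : G.HasSlimGeodesicTriangles δ)
    {x y w : V} {p : G.Walk x y} (hp : p.length = G.dist x y) {i : ℕ} (hi : i ≤ p.length)
    (hi₁ : G.dist x y + G.dist x w ≤ 2 * i + G.dist y w)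
    (hi₂ : 2 * i + G.dist y w ≤ G.dist x y + G.dist x w + 1) :
    2 * G.dist (p.getVert i) w + G.dist x y ≤ G.dist x w + G.dist y w + 4 * δ + 1 := by
  obtain ⟨q, hq⟩ := hc.exists_walk_length_eq_dist x w
  obtain ⟨r, hr⟩ := hc.exists_walk_length_eq_dist y w
  obtain ⟨v, hv, huv⟩ := hδ p q r hp hq hr _ (p.getVert_mem_support i)
  have := hc.dist_triangle (u := p.getVert i) (v := v) (w := w)
  rcases List.mem_append.1 hv with hv | hv
  · have := q.dist_add_dist_of_mem_support hq hv
    have := p.dist_start_getVert_of_length_eq_dist hp hi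
    have := hc.dist_triangle (u := x) (v := v) (w := p.getVert i)
    have := dist_comm (G := G) (u := v) (v := p.getVert i)
    omega
  · have := r.dist_add_dist_of_mem_support hr hv
    have := p.dist_getVert_end_of_length_eq_dist hp hi
    have := hc.dist_triangle (u := p.getVert i) (v := v) (w := y)
    have := dist_comm (G := G) (u := v) (v := y)
    omega

theorem gromovProduct_ge (hc : G.Connected) (hδ : G.HasSlimGeodesicTriangles δ) (w x y z : V) :
    ((G.dist x w : ℝ) + (G.dist y w : ℝ) - (G.dist x y : ℝ)) / 2 ≥
      min (((G.dist x w : ℝ) + (G.dist z w : ℝ) - (G.dist x z : ℝ)) / 2)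
        (((G.dist y w : ℝ) + (G.dist z w : ℝ) - (G.dist y z : ℝ)) / 2) - (3 * δ + 1) := by
  obtain ⟨p, hp⟩ := hc.exists_walk_length_eq_dist x y
  obtain ⟨q, hq⟩ := hc.exists_walk_length_eq_dist x z
  obtain ⟨r, hr⟩ := hc.exists_walk_length_eq_dist y z
  -- `p.getVert i` is where `w` projects to `p`: `i` is the Gromov product `(y|w)_x`, rounded up.
  set i := (G.dist x y + G.dist x w + 1 - G.dist y w) / 2
  have := hc.dist_triangle (u := x) (v := y) (w := w)
  have := hc.dist_triangle (u := y) (v := x) (w := w)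
  have := dist_comm (G := G) (u := x) (v := y)
  have hi : i ≤ p.length := by omega
  have hw := hδ.two_mul_dist_getVert_add_le hc (w := w) hp hi (by omega) (by omega)
  obtain ⟨v, hv, huv⟩ := hδ p q r hp hq hr _ (p.getVert_mem_support i)
  have := hc.dist_triangle (u := v) (v := p.getVert i) (w := w)
  have := dist_comm (G := G) (u := v) (v := p.getVert i)
  rcases List.mem_append.1 hv with hv | hv
  · have := q.dist_add_dist_le_of_mem_support_s1 hc hq hv w
    have key : (G.dist x w + G.dist z w + G.dist x y : ℝ) ≤
        G.dist x z + G.dist x w + G.dist y w + 6 * δ + 1 := by exact_mod_cast (by omega)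
    linarith [min_le_left (((G.dist x w : ℝ) + G.dist z w - G.dist x z) / 2)
      (((G.dist y w : ℝ) + G.dist z w - G.dist y z) / 2)]
  · have := r.dist_add_dist_le_of_mem_support_s1 hc hr hv w
    have key : (G.dist y w + G.dist z w + G.dist x y : ℝ) ≤
        G.dist y z + G.dist x w + G.dist y w + 6 * δ + 1 := by exact_mod_cast (by omega)
    linarith [min_le_right (((G.dist x w : ℝ) + G.dist z w - G.dist x z) / 2)
      (((G.dist y w : ℝ) + G.dist z w - G.dist y z) / 2)]

end HasSlimGeodesicTriangles

end SimpleGraph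

/-- For all reals `h, h' ≥ 0` there exist `k, R ≥ 0` (depending only on
`h` and `h'`) such that: for any connected simple graph `G` on `V` and any family of sets
`L x y ⊆ V` containing `x` and `y` with (i) the induced subgraph on the closed
`h'`-neighborhood `N_G(L x y, h')` connected, (ii) diameter of `L x y` at most `h`
whenever `d_G(x,y) ≤ 1`, and (iii) `L x y ⊆ N_G(L x z ∪ L y z, h)` for all `x y z`,
the graph metric on `V` is `k`-hyperbolic in the sense of Gromov, and for all `x, y` the
Hausdorff distance between `L x y` and the vertex set of any geodesic from `x` to `y`
is at most `R`. -/
theorem disc_graph_hyperbolicity_criterion_coarsely_connected :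
    ∀ h h' : ℝ, 0 ≤ h → 0 ≤ h' → ∃ k R : ℝ, 0 ≤ k ∧ 0 ≤ R ∧
      ∀ (V : Type) (G : SimpleGraph V), G.Connected →
      ∀ L : V → V → Set V,
      (∀ x y : V, x ∈ L x y ∧ y ∈ L x y) →
      -- (i) the induced subgraph on the closed `h'`-neighborhood of `L x y` is connected
      (∀ x y : V,
        (G.induce {v : V | ∃ a ∈ L x y, (G.dist v a : ℝ) ≤ h'}).Connected) →
      -- (ii) diameter bound for adjacent or equal endpoints
      (∀ x y : V, (G.dist x y : ℝ) ≤ 1 →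
        ∀ a ∈ L x y, ∀ b ∈ L x y, (G.dist a b : ℝ) ≤ h) →
      -- (iii) the slim-triangles condition
      (∀ x y z : V, ∀ a ∈ L x y,
        ∃ b ∈ L x z ∪ L y z, (G.dist a b : ℝ) ≤ h) →
      -- conclusion: Gromov hyperbolicity of the graph metric ...
      ((∀ w x y z : V,
          ((G.dist x w : ℝ) + (G.dist y w : ℝ) - (G.dist x y : ℝ)) / 2 ≥
            min (((G.dist x w : ℝ) + (G.dist z w : ℝ) - (G.dist x z : ℝ)) / 2)
                (((G.dist y w : ℝ) + (G.dist z w : ℝ) - (G.dist y z : ℝ)) / 2) - k) ∧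
        -- ... and the Hausdorff-distance bound for geodesics
        (∀ x y : V, ∀ p : G.Walk x y, p.length = G.dist x y →
          (∀ a ∈ L x y, ∃ v ∈ p.support, (G.dist a v : ℝ) ≤ R) ∧
          (∀ v ∈ p.support, ∃ a ∈ L x y, (G.dist v a : ℝ) ≤ R))) := by
  intro h h' _ h'0
  set H := ⌊h⌋₊
  set K := ⌊h'⌋₊
  refine ⟨3 * ((K + 3 * 2 ^ (2 * H + 8) + H : ℕ) : ℝ) + 1, (K + 2 * 2 ^ (2 * H + 8) : ℕ),
    by positivity, by positivity, ?_⟩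
  intro V G hc L hmem hconn hdiam hslim
  have hL : G.GuessedGeodesics L H :=
    { left_mem := fun x y ↦ (hmem x y).1
      right_mem := fun x y ↦ (hmem x y).2
      dist_le_of_dist_le_one := fun hxy _ _ ha hb ↦
        Nat.le_floor (hdiam _ _ (by exact_mod_cast hxy) _ ha _ hb)
      exists_dist_le := fun x y z a ha ↦
        (hslim x y z a ha).imp fun _ hb ↦ ⟨hb.1, Nat.le_floor hb.2⟩ }
  have hconn' : ∀ x y, (G.induce {v | ∃ a ∈ L x y, G.dist v a ≤ K}).Connected := by
    intro x y
    rw [show {v | ∃ a ∈ L x y, G.dist v a ≤ K} = {v | ∃ a ∈ L x y, (G.dist v a : ℝ) ≤ h'} by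
      simp only [K, Nat.le_floor_iff h'0]]
    exact hconn x y
  refine ⟨(hL.hasSlimGeodesicTriangles hc hconn').gromovProduct_ge hc,
    fun x y p hp ↦ ⟨fun a ha ↦ ?_, fun v hv ↦ ?_⟩⟩
  · obtain ⟨j, -, haj⟩ := hL.exists_dist_getVert_le_of_length_eq_dist hc p hp ha
    exact ⟨_, p.getVert_mem_support j, by exact_mod_cast (by omega : G.dist a _ ≤ _)⟩
  · obtain ⟨j, rfl, hj⟩ := SimpleGraph.Walk.mem_support_iff_exists_getVert.1 hv
    obtain ⟨a, ha, hja⟩ := hL.exists_mem_dist_getVert_le hc hconn' hp hj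
    exact ⟨a, ha, by exact_mod_cast hja⟩
end

section
/- Let G be a connected simple graph with vertex set V, let x, y ∈ V, and let R ≥ 0 be a real number. Let g be a geodesic from x to y, and let P be a walk from x to y such that every vertex of P lies within graph distance R of some vertex of g. Then every vertex of g lies within graph distance 2R + 2 of some vertex of P. -/
open SimpleGraph

private lemma aux_decomp {V : Type} {G : SimpleGraph V} (hG : G.Connected)
    {x y w1 w2 : V} (a : G.Walk x w1) (b : G.Walk w1 w2) (c : G.Walk w2 y)
    (h : a.length + b.length + c.length = G.dist x y) :
    G.dist w1 w2 = b.length ∧ G.dist x w1 = a.length ∧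
      G.dist x w2 = a.length + b.length := by
  have h1 : G.dist x w1 ≤ a.length := SimpleGraph.dist_le a
  have h2 : G.dist w1 w2 ≤ b.length := SimpleGraph.dist_le b
  have h3 : G.dist w2 y ≤ c.length := SimpleGraph.dist_le c
  have h4 : G.dist x w2 ≤ a.length + b.length := by
    simpa using SimpleGraph.dist_le (a.append b)
  have t1 : G.dist x y ≤ G.dist x w1 + G.dist w1 w2 + G.dist w2 y :=
    le_trans (hG.dist_triangle (v := w1))
      (by have := hG.dist_triangle (u := w1) (v := w2) (w := y); omega)
  have t2 : G.dist x y ≤ G.dist x w2 + G.dist w2 y := hG.dist_triangle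
  omega

/-- On a geodesic, the distance between two support vertices is the difference of
their distances from the start. -/
private lemma aux_geo {V : Type} {G : SimpleGraph V} (hG : G.Connected)
    {x y : V} (g : G.Walk x y) (hg : g.length = G.dist x y)
    {w1 w2 : V} (h1 : w1 ∈ g.support) (h2 : w2 ∈ g.support) :
    (G.dist w1 w2 : ℤ) ≤ |(G.dist x w1 : ℤ) - (G.dist x w2 : ℤ)| := by
  classical
  have hsplit : w1 ∈ (g.takeUntil w2 h2).support ∨ w1 ∈ (g.dropUntil w2 h2).support := by
    rw [← SimpleGraph.Walk.mem_support_append_iff, g.take_spec h2]; exact h1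
  rcases hsplit with hc | hc
  · set t := g.takeUntil w2 h2 with ht
    have hlen : (t.takeUntil w1 hc).length + (t.dropUntil w1 hc).length
        + (g.dropUntil w2 h2).length = G.dist x y := by
      have e1 := congr_arg SimpleGraph.Walk.length (t.take_spec hc)
      have e2 := congr_arg SimpleGraph.Walk.length (g.take_spec h2)
      rw [SimpleGraph.Walk.length_append] at e1 e2
      rw [← ht] at e2
      rw [← hg]; omega
    obtain ⟨d1, d2, d3⟩ := aux_decomp hG _ _ _ hlen
    rw [d1, d2, d3]
    rw [abs_sub_comm]
    push_cast
    rw [show ((t.takeUntil w1 hc).length : ℤ) + (t.dropUntil w1 hc).length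
        - (t.takeUntil w1 hc).length = ((t.dropUntil w1 hc).length : ℤ) by ring]
    simp
  · set t := g.dropUntil w2 h2 with ht
    have hlen : (g.takeUntil w2 h2).length + (t.takeUntil w1 hc).length
        + (t.dropUntil w1 hc).length = G.dist x y := by
      have e1 := congr_arg SimpleGraph.Walk.length (t.take_spec hc)
      have e2 := congr_arg SimpleGraph.Walk.length (g.take_spec h2)
      rw [SimpleGraph.Walk.length_append] at e1 e2
      rw [← ht] at e2
      rw [← hg]; omega
    obtain ⟨d1, d2, d3⟩ := aux_decomp hG _ _ _ hlen
    rw [G.dist_comm, d1, d2, d3]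
    push_cast
    rw [show ((g.takeUntil w2 h2).length : ℤ) + (t.takeUntil w1 hc).length
        - (g.takeUntil w2 h2).length = ((t.takeUntil w1 hc).length : ℤ) by ring]
    simp

/-- Discrete intermediate value along a walk. -/
private lemma aux_ivt {V : Type} {G : SimpleGraph V} (hG : G.Connected) (x : V) :
    ∀ {u y : V} (P : G.Walk u y) (n : ℕ), G.dist x u ≤ n → n ≤ G.dist x y →
      ∃ v ∈ P.support, G.dist x v = n := by
  intro u y P
  induction P with
  | nil => exact fun n h1 h2 => ⟨_, SimpleGraph.Walk.start_mem_support _, le_antisymm h1 h2⟩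
  | @cons u u' y hadj p ih =>
    intro n h1 h2
    by_cases hc : G.dist x u = n
    · exact ⟨u, SimpleGraph.Walk.start_mem_support _, hc⟩
    · have hstep : G.dist u u' ≤ 1 := by
        simpa using SimpleGraph.dist_le (SimpleGraph.Walk.cons hadj SimpleGraph.Walk.nil)
      have htri : G.dist x u' ≤ G.dist x u + G.dist u u' := hG.dist_triangle
      obtain ⟨v, hv, hvd⟩ := ih n (by omega) h2
      exact ⟨v, by simp [hv], hvd⟩

/-- Let `G` be a connected simple graph, `x, y` vertices, `R ≥ 0` real.
Let `g` be a geodesic from `x` to `y` (a walk of length `d_G(x,y)`) and `P` a walk from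
`x` to `y` each of whose vertices lies within graph distance `R` of some vertex of `g`.
Then every vertex of `g` lies within graph distance `2R + 2` of some vertex of `P`. -/
theorem geodesic_near_path
    (V : Type) (G : SimpleGraph V) (hG : G.Connected)
    (x y : V) (R : ℝ) (hR : 0 ≤ R)
    (g : G.Walk x y) (hg : g.length = G.dist x y)
    (P : G.Walk x y)
    (hP : ∀ v ∈ P.support, ∃ w ∈ g.support, (G.dist v w : ℝ) ≤ R) :
    ∀ w ∈ g.support, ∃ v ∈ P.support, (G.dist w v : ℝ) ≤ 2 * R + 2 := by
  intro w hw
  classical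
  have hi : G.dist x w ≤ G.dist x y := by
    calc G.dist x w ≤ (g.takeUntil w hw).length := SimpleGraph.dist_le _
    _ ≤ g.length := SimpleGraph.Walk.length_takeUntil_le g hw
    _ = G.dist x y := hg
  obtain ⟨v, hv, hvd⟩ := aux_ivt hG x P (G.dist x w) (by rw [G.dist_self]; exact Nat.zero_le _) hi
  obtain ⟨w', hw', hw'R⟩ := hP v hv
  have habs : (G.dist w w' : ℤ) ≤ |(G.dist x w : ℤ) - (G.dist x w' : ℤ)| :=
    aux_geo hG g hg hw hw'
  have ht1 : G.dist x w' ≤ G.dist x v + G.dist v w' := hG.dist_triangle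
  have ht2 : G.dist x v ≤ G.dist x w' + G.dist w' v := hG.dist_triangle
  have hcomm : G.dist w' v = G.dist v w' := G.dist_comm
  have habs2 : |(G.dist x w : ℤ) - (G.dist x w' : ℤ)| ≤ G.dist v w' := by
    rw [abs_le]; omega
  have hfin : G.dist w v ≤ G.dist v w' + G.dist v w' := by
    have h3 : G.dist w v ≤ G.dist w w' + G.dist w' v := hG.dist_triangle
    omega
  refine ⟨v, hv, ?_⟩
  have : (G.dist w v : ℝ) ≤ (G.dist v w' : ℝ) + (G.dist v w' : ℝ) := by
    exact_mod_cast hfin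
  linarith
end

section
/- Let G be a connected simple graph with vertex set V, let Y ⊆ V, and let R ≥ 0 be a real number. Suppose that for all y, y' ∈ Y and every geodesic g from y to y', there exists a walk from y to y' all of whose vertices lie in Y and such that each of its vertices lies within graph distance R of some vertex of g. Then Y is (2R + 2)-quasiconvex in G: for all y, y' ∈ Y, every vertex of every geodesic from y to y' lies within graph distance 2R + 2 of some element of Y. -/
open SimpleGraph

private lemma geo_split {V : Type} [DecidableEq V] {G : SimpleGraph V} (hG : G.Connected)
    {a b v : V} (g : G.Walk a b) (hg : g.length = G.dist a b) (hv : v ∈ g.support) :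
    G.dist a v = (g.takeUntil v hv).length ∧ G.dist v b = (g.dropUntil v hv).length := by
  have hlen : (g.takeUntil v hv).length + (g.dropUntil v hv).length = g.length := by
    have := congr_arg SimpleGraph.Walk.length (g.take_spec hv)
    rw [SimpleGraph.Walk.length_append] at this; exact this
  have h1 : G.dist a v ≤ (g.takeUntil v hv).length := SimpleGraph.dist_le _
  have h2 : G.dist v b ≤ (g.dropUntil v hv).length := SimpleGraph.dist_le _
  have h3 : G.dist a b ≤ G.dist a v + G.dist v b := hG.dist_triangle
  omega

private lemma walk_ivt {V : Type} {G : SimpleGraph V} (f : V → ℕ)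
    (hf : ∀ a b : V, G.Adj a b → f b ≤ f a + 1) (i : ℕ) :
    ∀ {u v : V} (P : G.Walk u v), f u ≤ i → i ≤ f v → ∃ p ∈ P.support, f p = i := by
  intro u v P
  induction P with
  | nil => intro h1 h2; exact ⟨_, SimpleGraph.Walk.start_mem_support _, le_antisymm h1 h2⟩
  | @cons u u' v h q ih =>
    intro h1 h2
    by_cases hc : f u' ≤ i
    · obtain ⟨p, hp, hpf⟩ := ih hc h2
      exact ⟨p, by simp [hp], hpf⟩
    · refine ⟨u, by simp, ?_⟩
      have := hf u u' h
      omega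

/-- Let `G` be a connected simple graph, `Y ⊆ V`, `R ≥ 0` real. Suppose
for all `y, y' ∈ Y` and every geodesic `g` from `y` to `y'` there is a walk from `y` to
`y'` with all vertices in `Y`, each of whose vertices lies within graph distance `R` of
some vertex of `g`. Then `Y` is `(2R + 2)`-quasiconvex: every vertex of every geodesic
joining two points of `Y` lies within graph distance `2R + 2` of some element of `Y`. -/
theorem quasiconvex_of_paths_in_Y
    (V : Type) (G : SimpleGraph V) (hG : G.Connected)
    (Y : Set V) (R : ℝ) (hR : 0 ≤ R)
    (hpaths : ∀ y ∈ Y, ∀ y' ∈ Y, ∀ g : G.Walk y y', g.length = G.dist y y' →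
      ∃ P : G.Walk y y', (∀ v ∈ P.support, v ∈ Y) ∧
        (∀ v ∈ P.support, ∃ w ∈ g.support, (G.dist v w : ℝ) ≤ R)) :
    ∀ y ∈ Y, ∀ y' ∈ Y, ∀ g : G.Walk y y', g.length = G.dist y y' →
      ∀ w ∈ g.support, ∃ a ∈ Y, (G.dist w a : ℝ) ≤ 2 * R + 2 := by
  intro y hy y' hy' g hg w hw
  classical
  obtain ⟨P, hPY, hPnear⟩ := hpaths y hy y' hy' g hg
  -- split g at w
  obtain ⟨hiw, hwb⟩ := geo_split hG g hg hw
  set i := G.dist y w with hi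
  have hsum : i + G.dist w y' = G.dist y y' := by
    have := congr_arg SimpleGraph.Walk.length (g.take_spec hw)
    rw [SimpleGraph.Walk.length_append] at this
    omega
  -- find p on P with dist y p = i
  have hf : ∀ a b : V, G.Adj a b → G.dist y b ≤ G.dist y a + 1 := by
    intro a b hab
    have h1 : G.dist a b ≤ 1 := by
      simpa using SimpleGraph.dist_le (SimpleGraph.Walk.cons hab SimpleGraph.Walk.nil)
    have := hG.dist_triangle (u := y) (v := a) (w := b)
    omega
  have hiley : i ≤ G.dist y y' := by omega
  obtain ⟨p, hpP, hpf⟩ := walk_ivt (G.dist y) hf i P (by rw [SimpleGraph.dist_self]; omega) hiley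
  refine ⟨p, hPY p hpP, ?_⟩
  obtain ⟨gj, hgj, hdpj⟩ := hPnear p hpP
  -- show dist w gj ≤ dist p gj
  set j := G.dist y gj with hj
  have htri1 : j ≤ i + G.dist p gj := by
    have := hG.dist_triangle (u := y) (v := p) (w := gj)
    omega
  have htri2 : i ≤ j + G.dist p gj := by
    have h := hG.dist_triangle (u := y) (v := gj) (w := p)
    have hc : G.dist gj p = G.dist p gj := SimpleGraph.dist_comm
    omega
  have hwgj : G.dist w gj ≤ G.dist p gj := by
    rw [← g.take_spec hw] at hgj
    rw [SimpleGraph.Walk.mem_support_append_iff] at hgj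
    rcases hgj with hgj | hgj
    · -- gj on the take part : geodesic from y to w of length i
      have htake : (g.takeUntil w hw).length = G.dist y w := hiw.symm
      obtain ⟨hj1, hj2⟩ := geo_split hG (g.takeUntil w hw) htake hgj
      have hadd : (((g.takeUntil w hw)).takeUntil gj hgj).length
          + ((g.takeUntil w hw).dropUntil gj hgj).length = (g.takeUntil w hw).length := by
        have := congr_arg SimpleGraph.Walk.length ((g.takeUntil w hw).take_spec hgj)
        rw [SimpleGraph.Walk.length_append] at this; exact this
      have hc : G.dist w gj = G.dist gj w := SimpleGraph.dist_comm
      omega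
    · -- gj on the drop part : geodesic from w to y' of length dist w y'
      have hdrop : (g.dropUntil w hw).length = G.dist w y' := hwb.symm
      obtain ⟨hj1, hj2⟩ := geo_split hG (g.dropUntil w hw) hdrop hgj
      have hadd : ((g.dropUntil w hw).takeUntil gj hgj).length
          + ((g.dropUntil w hw).dropUntil gj hgj).length = (g.dropUntil w hw).length := by
        have := congr_arg SimpleGraph.Walk.length ((g.dropUntil w hw).take_spec hgj)
        rw [SimpleGraph.Walk.length_append] at this; exact this
      -- j + dist gj y' = dist y y'
      have hgj_in_g : gj ∈ g.support := by
        rw [← g.take_spec hw, SimpleGraph.Walk.mem_support_append_iff]; exact Or.inr hgj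
      obtain ⟨hg1, hg2⟩ := geo_split hG g hg hgj_in_g
      have hsum2 : j + G.dist gj y' = G.dist y y' := by
        have := congr_arg SimpleGraph.Walk.length (g.take_spec hgj_in_g)
        rw [SimpleGraph.Walk.length_append] at this
        omega
      omega
  have htri3 : G.dist w p ≤ G.dist w gj + G.dist p gj := by
    have h := hG.dist_triangle (u := w) (v := gj) (w := p)
    have hc : G.dist gj p = G.dist p gj := SimpleGraph.dist_comm
    omega
  have hfin : G.dist w p ≤ 2 * G.dist p gj := by omega
  calc (G.dist w p : ℝ) ≤ 2 * (G.dist p gj : ℝ) := by exact_mod_cast hfin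
    _ ≤ 2 * R := by linarith
    _ ≤ 2 * R + 2 := by linarith
end

section
/- Let X be a metric space, let x, y ∈ X, and let g : [0, d(x,y)] → X be an isometric embedding (a geodesic) with g(0) = x and g(d(x,y)) = y. Let R ≥ 0 be a real number and let P ⊆ X be a connected set with x, y ∈ P such that every point of P has infimal distance at most R from the image of g. Then every point of the image of g has infimal distance at most 2R from P. -/
/-- Let `X` be a metric space, `x, y ∈ X`, and `g` a geodesic from `x`
to `y`, i.e. a map isometric on the interval `[0, dist x y]` with `g 0 = x` and
`g (dist x y) = y`. Let `R ≥ 0` and let `P ⊆ X` be a connected set containing `x` and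
`y` such that every point of `P` has infimal distance at most `R` from the image of `g`.
Then every point of the image of `g` has infimal distance at most `2R` from `P`. -/
theorem geodesic_near_connected_set
    (X : Type) [MetricSpace X] (x y : X)
    (g : ℝ → X)
    (hgiso : ∀ s ∈ Set.Icc (0 : ℝ) (dist x y), ∀ t ∈ Set.Icc (0 : ℝ) (dist x y),
      dist (g s) (g t) = |s - t|)
    (hg0 : g 0 = x) (hg1 : g (dist x y) = y)
    (R : ℝ) (hR : 0 ≤ R)
    (P : Set X) (hPconn : IsConnected P) (hxP : x ∈ P) (hyP : y ∈ P)
    (hPnear : ∀ p ∈ P, Metric.infDist p (g '' Set.Icc (0 : ℝ) (dist x y)) ≤ R) :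
    ∀ z ∈ g '' Set.Icc (0 : ℝ) (dist x y), Metric.infDist z P ≤ 2 * R := by
  set D := dist x y with hDdef
  have hD : (0 : ℝ) ≤ D := dist_nonneg
  -- continuity of g on [0, D]
  have hcont : ContinuousOn g (Set.Icc 0 D) := by
    have : LipschitzOnWith 1 g (Set.Icc 0 D) := by
      apply LipschitzOnWith.of_dist_le_mul
      intro a ha b hb
      rw [hgiso a ha b hb]
      simp [Real.dist_eq]
    exact this.continuousOn
  rintro z ⟨t, ht, rfl⟩
  -- the two subsets of the geodesic
  have hS1comp : IsCompact (g '' Set.Icc 0 t) :=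
    isCompact_Icc.image_of_continuousOn (hcont.mono (Set.Icc_subset_Icc le_rfl ht.2))
  have hS2comp : IsCompact (g '' Set.Icc t D) :=
    isCompact_Icc.image_of_continuousOn (hcont.mono (Set.Icc_subset_Icc ht.1 le_rfl))
  have hS1ne : (g '' Set.Icc 0 t).Nonempty := ⟨g 0, ⟨0, ⟨le_rfl, ht.1⟩, rfl⟩⟩
  have hS2ne : (g '' Set.Icc t D).Nonempty := ⟨g t, ⟨t, ⟨le_rfl, ht.2⟩, rfl⟩⟩
  set A := {p : X | Metric.infDist p (g '' Set.Icc 0 t) ≤ R} with hA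
  set B := {p : X | Metric.infDist p (g '' Set.Icc t D) ≤ R} with hB
  have hAclosed : IsClosed A :=
    isClosed_le (Metric.continuous_infDist_pt _) continuous_const
  have hBclosed : IsClosed B :=
    isClosed_le (Metric.continuous_infDist_pt _) continuous_const
  have hScomp : IsCompact (g '' Set.Icc 0 D) := isCompact_Icc.image_of_continuousOn hcont
  have hcover : P ⊆ A ∪ B := by
    intro p hp
    have hne : (g '' Set.Icc 0 D).Nonempty := ⟨x, ⟨0, ⟨le_rfl, hD⟩, hg0⟩⟩
    obtain ⟨q, hq, hqd⟩ := hScomp.exists_infDist_eq_dist hne p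
    obtain ⟨s, hs, rfl⟩ := hq
    have hdq : dist p (g s) ≤ R := by
      rw [← hqd]; exact hPnear p hp
    by_cases hst : s ≤ t
    · refine Set.mem_union_left _ ?_
      have hmem : g s ∈ g '' Set.Icc 0 t := ⟨s, ⟨hs.1, hst⟩, rfl⟩
      exact le_trans (Metric.infDist_le_dist_of_mem hmem) hdq
    · refine Set.mem_union_right _ ?_
      have hmem : g s ∈ g '' Set.Icc t D := ⟨s, ⟨le_of_not_ge hst, hs.2⟩, rfl⟩
      exact le_trans (Metric.infDist_le_dist_of_mem hmem) hdq
  have hxA : x ∈ P ∩ A := by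
    refine ⟨hxP, ?_⟩
    have : Metric.infDist x (g '' Set.Icc 0 t) ≤ dist x (g 0) :=
      Metric.infDist_le_dist_of_mem ⟨0, ⟨le_rfl, ht.1⟩, rfl⟩
    rw [hg0, dist_self] at this
    exact le_trans this hR
  have hyB : y ∈ P ∩ B := by
    refine ⟨hyP, ?_⟩
    have : Metric.infDist y (g '' Set.Icc t D) ≤ dist y (g D) :=
      Metric.infDist_le_dist_of_mem ⟨D, ⟨ht.2, le_rfl⟩, rfl⟩
    rw [hg1, dist_self] at this
    exact le_trans this hR
  obtain ⟨p, hpP, hpA, hpB⟩ :=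
    (isPreconnected_closed_iff.mp hPconn.isPreconnected A B hAclosed hBclosed hcover
      ⟨x, hxA⟩ ⟨y, hyB⟩)
  -- extract near points on each side
  obtain ⟨q1, hq1, hq1d⟩ := hS1comp.exists_infDist_eq_dist hS1ne p
  obtain ⟨q2, hq2, hq2d⟩ := hS2comp.exists_infDist_eq_dist hS2ne p
  obtain ⟨s, hs, rfl⟩ := hq1
  obtain ⟨u, hu, rfl⟩ := hq2
  have hds : dist p (g s) ≤ R := hq1d ▸ hpA
  have hdu : dist p (g u) ≤ R := hq2d ▸ hpB
  have hsI : s ∈ Set.Icc 0 D := ⟨hs.1, le_trans hs.2 ht.2⟩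
  have huI : u ∈ Set.Icc 0 D := ⟨le_trans ht.1 hu.1, hu.2⟩
  have hsu : u - s ≤ 2 * R := by
    have := dist_triangle (g s) p (g u)
    rw [dist_comm (g s) p] at this
    have h1 : dist (g s) (g u) = |s - u| := hgiso s hsI u huI
    have : |s - u| ≤ 2 * R := by rw [← h1]; linarith
    rw [abs_sub_comm] at this
    calc u - s ≤ |u - s| := le_abs_self _
    _ ≤ 2 * R := this
  rcases le_or_gt (t - s) R with hcase | hcase
  · have h1 : dist (g t) (g s) = t - s := by
      rw [hgiso t ht s hsI, abs_of_nonneg (by linarith [hs.2])]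
    have : dist (g t) p ≤ 2 * R := by
      calc dist (g t) p ≤ dist (g t) (g s) + dist (g s) p := dist_triangle _ _ _
      _ = (t - s) + dist p (g s) := by rw [h1, dist_comm]
      _ ≤ 2 * R := by linarith
    exact le_trans (Metric.infDist_le_dist_of_mem hpP) this
  · have hut : u - t ≤ R := by linarith
    have h1 : dist (g t) (g u) = u - t := by
      rw [hgiso t ht u huI, abs_sub_comm, abs_of_nonneg (by linarith [hu.1])]
    have : dist (g t) p ≤ 2 * R := by
      calc dist (g t) p ≤ dist (g t) (g u) + dist (g u) p := dist_triangle _ _ _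
      _ = (u - t) + dist p (g u) := by rw [h1, dist_comm]
      _ ≤ 2 * R := by linarith
    exact le_trans (Metric.infDist_le_dist_of_mem hpP) this
end

section
/- Let X be a metric space, let Y ⊆ X, and let R ≥ 0 be a real number. Suppose that for all y, y' ∈ Y and every geodesic g from y to y' (an isometric embedding g : [0, d(y,y')] → X with g(0) = y and g(d(y,y')) = y'), there exists a connected set P ⊆ Y with y, y' ∈ P such that every point of P has infimal distance at most R from the image of g. Then for all y, y' ∈ Y and every geodesic g from y to y', every point of the image of g has infimal distance at most 2R from Y. -/
/-- Let `X` be a metric space, `Y ⊆ X`, `R ≥ 0`. Suppose that for all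
`y, y' ∈ Y` and every geodesic `g` from `y` to `y'` (a map isometric on the interval
`[0, dist y y']` with `g 0 = y` and `g (dist y y') = y'`) there is a connected set
`P ⊆ Y` containing `y` and `y'` all of whose points have infimal distance at most `R`
from the image of `g`. Then for all `y, y' ∈ Y` and every geodesic `g` from `y` to
`y'`, every point of the image of `g` has infimal distance at most `2R` from `Y`. -/
theorem quasiconvex_of_connected_subsets
    (X : Type) [MetricSpace X] (Y : Set X) (R : ℝ) (hR : 0 ≤ R)
    (hsets : ∀ y ∈ Y, ∀ y' ∈ Y, ∀ g : ℝ → X,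
      (∀ s ∈ Set.Icc (0 : ℝ) (dist y y'), ∀ t ∈ Set.Icc (0 : ℝ) (dist y y'),
        dist (g s) (g t) = |s - t|) →
      g 0 = y → g (dist y y') = y' →
      ∃ P : Set X, P ⊆ Y ∧ IsConnected P ∧ y ∈ P ∧ y' ∈ P ∧
        ∀ p ∈ P, Metric.infDist p (g '' Set.Icc (0 : ℝ) (dist y y')) ≤ R) :
    ∀ y ∈ Y, ∀ y' ∈ Y, ∀ g : ℝ → X,
      (∀ s ∈ Set.Icc (0 : ℝ) (dist y y'), ∀ t ∈ Set.Icc (0 : ℝ) (dist y y'),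
        dist (g s) (g t) = |s - t|) →
      g 0 = y → g (dist y y') = y' →
      ∀ z ∈ g '' Set.Icc (0 : ℝ) (dist y y'), Metric.infDist z Y ≤ 2 * R := by
  intro y hy y' hy' g hiso hg0 hgD z hz
  obtain ⟨t, ht, rfl⟩ := hz
  set D := dist y y' with hD
  obtain ⟨P, hPY, hPconn, hyP, hy'P, hPR⟩ := hsets y hy y' hy' g hiso hg0 hgD
  obtain ⟨ht0, htD⟩ := ht
  set S1 := g '' Set.Icc (0 : ℝ) t with hS1
  set S2 := g '' Set.Icc t D with hS2
  have hS1ne : S1.Nonempty := ⟨g t, ⟨t, ⟨ht0, le_refl t⟩, rfl⟩⟩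
  have hS2ne : S2.Nonempty := ⟨g t, ⟨t, ⟨le_refl t, htD⟩, rfl⟩⟩
  have hunion : g '' Set.Icc (0 : ℝ) D = S1 ∪ S2 := by
    rw [hS1, hS2, ← Set.image_union, Set.Icc_union_Icc_eq_Icc ht0 htD]
  -- closed sets
  have hA : IsClosed {p : X | Metric.infDist p S1 ≤ R} :=
    isClosed_le (Metric.continuous_infDist_pt S1) continuous_const
  have hB : IsClosed {p : X | Metric.infDist p S2 ≤ R} :=
    isClosed_le (Metric.continuous_infDist_pt S2) continuous_const
  have hcover : P ⊆ {p : X | Metric.infDist p S1 ≤ R} ∪ {p : X | Metric.infDist p S2 ≤ R} := by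
    intro p hp
    rw [Set.mem_union, Set.mem_setOf_eq, Set.mem_setOf_eq]
    by_contra hcon
    push_neg at hcon
    obtain ⟨h1, h2⟩ := hcon
    have hle : Metric.infDist p (g '' Set.Icc (0 : ℝ) D) ≤ R := hPR p hp
    rw [hunion] at hle
    have hlt : Metric.infDist p (S1 ∪ S2) < min (Metric.infDist p S1) (Metric.infDist p S2) :=
      lt_of_le_of_lt hle (lt_min h1 h2)
    obtain ⟨q, hq, hqlt⟩ := (Metric.infDist_lt_iff (hS1ne.mono Set.subset_union_left)).mp hlt
    rcases hq with hq | hq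
    · exact absurd (Metric.infDist_le_dist_of_mem hq) (not_le.mpr (lt_of_lt_of_le hqlt (min_le_left _ _)))
    · exact absurd (Metric.infDist_le_dist_of_mem hq) (not_le.mpr (lt_of_lt_of_le hqlt (min_le_right _ _)))
  have hyA : y ∈ {p : X | Metric.infDist p S1 ≤ R} := by
    have : y ∈ S1 := ⟨0, ⟨le_refl 0, ht0⟩, hg0⟩
    simpa using le_trans (le_of_eq (Metric.infDist_zero_of_mem this)) hR
  have hy'B : y' ∈ {p : X | Metric.infDist p S2 ≤ R} := by
    have : y' ∈ S2 := ⟨D, ⟨htD, le_refl D⟩, hgD⟩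
    simpa using le_trans (le_of_eq (Metric.infDist_zero_of_mem this)) hR
  obtain ⟨p, hpP, hp1, hp2⟩ := isPreconnected_closed_iff.mp hPconn.isPreconnected _ _ hA hB
    hcover ⟨y, hyP, hyA⟩ ⟨y', hy'P, hy'B⟩
  simp only [Set.mem_setOf_eq] at hp1 hp2
  -- now conclude: for every ε > 0, infDist (g t) Y ≤ 2R + ε
  have key : ∀ ε : ℝ, 0 < ε → Metric.infDist (g t) Y ≤ 2 * R + ε := by
    intro ε hε
    have h1 : Metric.infDist p S1 < R + ε / 2 := lt_of_le_of_lt hp1 (by linarith)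
    have h2 : Metric.infDist p S2 < R + ε / 2 := lt_of_le_of_lt hp2 (by linarith)
    obtain ⟨a, ha, hda⟩ := (Metric.infDist_lt_iff hS1ne).mp h1
    obtain ⟨b, hb, hdb⟩ := (Metric.infDist_lt_iff hS2ne).mp h2
    obtain ⟨s, hs, rfl⟩ := ha
    obtain ⟨s', hs', rfl⟩ := hb
    rw [dist_comm] at hda hdb
    have hsI : s ∈ Set.Icc (0 : ℝ) D := ⟨hs.1, le_trans hs.2 htD⟩
    have hs'I : s' ∈ Set.Icc (0 : ℝ) D := ⟨le_trans ht0 hs'.1, hs'.2⟩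
    have htI : t ∈ Set.Icc (0 : ℝ) D := ⟨ht0, htD⟩
    have hss' : s' - s = dist (g s) (g s') := by
      rw [hiso s hsI s' hs'I, abs_of_nonpos (by linarith [hs.2, hs'.1])]; ring
    have hbound : s' - s < 2 * R + ε := by
      rw [hss']
      calc dist (g s) (g s') ≤ dist (g s) p + dist p (g s') := dist_triangle _ _ _
        _ < (R + ε / 2) + (R + ε / 2) := by
            rw [dist_comm p (g s')]; linarith
        _ = 2 * R + ε := by ring
    rcases le_total (t - s) (s' - t) with hc | hc
    · have hts : t - s < R + ε / 2 := by linarith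
      have hdzs : dist (g t) (g s) = t - s := by
        rw [hiso t htI s hsI, abs_of_nonneg (by linarith [hs.2])]
      have : dist (g t) p ≤ dist (g t) (g s) + dist (g s) p := dist_triangle _ _ _
      have hdzp : dist (g t) p < 2 * R + ε := by
        rw [hdzs] at this; linarith
      exact le_trans (Metric.infDist_le_dist_of_mem (hPY hpP)) (le_of_lt hdzp)
    · have hts : s' - t < R + ε / 2 := by linarith
      have hdzs : dist (g t) (g s') = s' - t := by
        rw [hiso t htI s' hs'I, abs_of_nonpos (by linarith [hs'.1])]; ring
      have : dist (g t) p ≤ dist (g t) (g s') + dist (g s') p := dist_triangle _ _ _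
      have hdzp : dist (g t) p < 2 * R + ε := by
        rw [hdzs] at this; linarith
      exact le_trans (Metric.infDist_le_dist_of_mem (hPY hpP)) (le_of_lt hdzp)
  exact le_of_forall_pos_le_add key
end
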